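/- If two bounded-degree graphs G and G' on at most N vertices each are (a,b) quasi-isometric, then the ratio of their spectral gaps for simple random walk is bounded above and below by constants depending only on a, b, and the degree bound d. -/

import Mathlib

open Finset SimpleGraph

variable {V : Type*}

/-- The transition matrix of the lazy simple random walk on a finite graph. -/
noncomputable def lazyWalkMatrix [Fintype V] [DecidableEq V]
    (G : SimpleGraph V) [DecidableRel G.Adj] : Matrix V V ℝ := fun u v =>
  if u = v then 1 / 2 else if G.Adj u v then 1 / (2 * (G.degree u)) else 0

/-- `γ` is the spectral gap of the lazy simple random walk on `G`: `1 − γ` is the largest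
eigenvalue of the walk matrix other than `1`. -/
noncomputable def IsLazySpectralGap [Fintype V] [DecidableEq V]
    (G : SimpleGraph V) [DecidableRel G.Adj] (γ : ℝ) : Prop :=
  IsGreatest {θ : ℝ | θ ≠ 1 ∧ ∃ f : V → ℝ, f ≠ 0 ∧
    ∀ v, ∑ u, lazyWalkMatrix G v u * f u = θ * f v} (1 - γ)

/-- `ψ` is an `(a,b)` quasi-isometry between the vertex sets of two graphs, with respect to
their shortest-path metrics. -/
def IsGraphQuasiIsometry {V V' : Type*} (G : SimpleGraph V) (G' : SimpleGraph V')
    (a b : ℝ) (ψ : V → V') : Prop :=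
  (∀ u v : V, a⁻¹ * G.dist u v - b ≤ (G'.dist (ψ u) (ψ v) : ℝ) ∧
      (G'.dist (ψ u) (ψ v) : ℝ) ≤ a * G.dist u v + b) ∧
    ∀ y : V', ∃ x : V, (G'.dist (ψ x) y : ℝ) ≤ a + b

/-!
The spectral gap is the minimum of the Rayleigh quotient `E(f) / (4 ∑ deg f²)` over functions
with `∑ deg f = 0`, where `E` is the Dirichlet energy: the lazy walk satisfies detailed balance
with respect to the degrees, so the spectral theorem applies to its symmetrisation
`D^{1/2} P D^{-1/2}`.

Pull an eigenfunction `f'` of `G'` for `1 - γ'` back along `ψ`. Adjacent vertices of `G` go to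
vertices at distance at most `a + b`; joining them by geodesics of `G'` crosses each dart of `G'`
a bounded number of times, since balls and the fibres of `ψ` have bounded size. Hence
`E_G(f' ∘ ψ) ≲ E_{G'}(f') = 4 γ' ∑ deg f'²`. Conversely, comparing `f'` with `f' ∘ ψ ∘ φ` for a
coarse inverse `φ` bounds `∑ deg f'²` by `O(γ')` times itself plus `O(1)` times the variance of
`f' ∘ ψ`. Either `γ'` is bounded below, and `γ ≤ 1` suffices, or the first term is absorbed and
`γ ≲ γ'`. The coarse inverse is itself a quasi-isometry, which gives the other inequality.
-/

open Matrix
open scoped RealInnerProductSpace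

theorem LinearMap.IsSymmetric.inner_apply_self_le {E : Type*} [NormedAddCommGroup E]
    [InnerProductSpace ℝ E] [FiniteDimensional ℝ E] {T : E →ₗ[ℝ] E} (hT : T.IsSymmetric)
    {r : ℝ} {x : E} (h : ∀ μ v, Module.End.HasEigenvector T μ v → μ ≤ r ∨ ⟪v, x⟫ = 0) :
    ⟪T x, x⟫ ≤ r * ‖x‖ ^ 2 := by
  set b := hT.eigenvectorBasis rfl
  set μ := hT.eigenvalues rfl
  have hTb : ∀ i, ⟪T x, b i⟫ = μ i * ⟪b i, x⟫ := fun i => by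
    rw [hT, hT.apply_eigenvectorBasis, real_inner_smul_right, real_inner_comm]; rfl
  rw [← b.sum_inner_mul_inner, ← b.sum_sq_inner_right, mul_sum]
  refine sum_le_sum fun i _ => ?_
  rw [hTb, mul_assoc, ← sq]
  rcases h _ _ (hT.hasEigenvector_eigenvectorBasis rfl i) with hμ | hx
  · exact mul_le_mul_of_nonneg_right hμ (sq_nonneg _)
  · simp [b, hx]

theorem Matrix.isHermitian_of_detailed_balance {ι : Type*} {w : ι → ℝ} (hw : ∀ i, 0 < w i)
    {M : Matrix ι ι ℝ} (hM : ∀ i j, w i * M i j = w j * M j i) :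
    (Matrix.of fun i j => √(w i) * M i j / √(w j)).IsHermitian := by
  ext i j
  simp only [conjTranspose_apply, star_trivial, of_apply]
  rw [div_eq_div_iff (Real.sqrt_pos.mpr (hw i)).ne' (Real.sqrt_pos.mpr (hw j)).ne']
  linear_combination M j i * Real.mul_self_sqrt (hw j).le - M i j * Real.mul_self_sqrt (hw i).le +
    hM j i

theorem Matrix.sum_mul_mulVec_le_of_detailed_balance {ι : Type*} [Fintype ι] [DecidableEq ι]
    {w : ι → ℝ} (hw : ∀ i, 0 < w i) {M : Matrix ι ι ℝ} (hM : ∀ i j, w i * M i j = w j * M j i)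
    {r : ℝ} {g : ι → ℝ}
    (h : ∀ μ (f : ι → ℝ), f ≠ 0 → M *ᵥ f = μ • f → μ ≤ r ∨ ∑ i, w i * f i * g i = 0) :
    ∑ i, w i * g i * (M *ᵥ g) i ≤ r * ∑ i, w i * g i ^ 2 := by
  set s : ι → ℝ := fun i => √(w i)
  have hs : ∀ i, s i ≠ 0 := fun i => (Real.sqrt_pos.mpr (hw i)).ne'
  have hss : ∀ i, s i * s i = w i := fun i => Real.mul_self_sqrt (hw i).le
  set N : Matrix ι ι ℝ := Matrix.of fun i j => s i * M i j / s j
  have hN : N.IsHermitian := isHermitian_of_detailed_balance hw hM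
  have hNM : ∀ f : ι → ℝ,
      toEuclideanLin N (WithLp.toLp 2 (s * f)) = WithLp.toLp 2 (s * (M *ᵥ f)) := fun f => by
    ext i
    change (N *ᵥ (s * f)) i = _
    simp only [mulVec, dotProduct, N, of_apply, Pi.mul_apply, mul_sum]
    exact sum_congr rfl fun j _ => by field_simp [hs j]
  have hinner : ∀ u v : ι → ℝ,
      ⟪WithLp.toLp 2 (s * u), WithLp.toLp 2 (s * v)⟫ = ∑ i, w i * u i * v i := fun u v => by
    simp only [EuclideanSpace.inner_eq_star_dotProduct, star_trivial, dotProduct, Pi.mul_apply]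
    exact sum_congr rfl fun i _ => by rw [← hss i]; ring
  have hT : (toEuclideanLin N).IsSymmetric := isSymmetric_toEuclideanLin_iff.mpr hN
  have key := hT.inner_apply_self_le (r := r) (x := WithLp.toLp 2 (s * g)) fun μ v ⟨hv, hv0⟩ => by
    set f : ι → ℝ := fun i => v i / s i
    have hsf : WithLp.toLp 2 (s * f) = v := by
      ext i; exact mul_div_cancel₀ _ (hs i)
    have hTv : toEuclideanLin N v = μ • v := Module.End.mem_eigenspace_iff.mp hv
    have hMf : M *ᵥ f = μ • f := by
      rw [← hsf, hNM] at hTv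
      ext i
      have hi := congrArg (fun x : EuclideanSpace ℝ ι => x i) hTv
      simp only [Pi.mul_apply, WithLp.ofLp_smul, Pi.smul_apply, smul_eq_mul] at hi ⊢
      exact mul_left_cancel₀ (hs i) (by rw [hi]; ring)
    have hf0 : f ≠ 0 := by
      rintro hf; apply hv0; rw [← hsf, hf, mul_zero]; rfl
    rw [← hsf, hinner]
    exact h μ f hf0 hMf
  rw [← real_inner_self_eq_norm_sq, hinner, hNM, real_inner_comm, hinner] at key
  simpa only [mul_assoc, sq] using key

theorem Finset.sum_mul_sq_le_sum_mul_sub_sq {ι : Type*} (s : Finset ι) {w f : ι → ℝ}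
    (hw : ∀ i ∈ s, 0 ≤ w i) (hf : ∑ i ∈ s, w i * f i = 0) (c : ℝ) :
    ∑ i ∈ s, w i * f i ^ 2 ≤ ∑ i ∈ s, w i * (f i - c) ^ 2 := by
  have : ∑ i ∈ s, w i * (f i - c) ^ 2 =
      ∑ i ∈ s, w i * f i ^ 2 - 2 * c * ∑ i ∈ s, w i * f i + c ^ 2 * ∑ i ∈ s, w i := by
    simp only [mul_sum, ← sum_sub_distrib, ← sum_add_distrib]
    exact sum_congr rfl fun i _ => by ring
  rw [this, hf]
  nlinarith [sum_nonneg hw, sq_nonneg c]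

namespace SimpleGraph

variable {G : SimpleGraph V}

theorem Walk.dist_le_of_mem_support {u v x : V} (p : G.Walk u v) (hx : x ∈ p.support) :
    G.dist u x ≤ p.length := by
  classical exact (dist_le _).trans (p.length_takeUntil_le_length hx)

theorem Walk.sub_eq_sum_darts (f : V → ℝ) {u v : V} (p : G.Walk u v) :
    f u - f v = (p.darts.map fun d => f d.fst - f d.snd).sum := by
  induction p with
  | nil => simp
  | cons h q ih => simp only [darts_cons, List.map_cons, List.sum_cons, ← ih]; ring

theorem Walk.sq_sub_le_length_mul_sum_darts (f : V → ℝ) {u v : V} (p : G.Walk u v) :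
    (f u - f v) ^ 2 ≤ p.length * (p.darts.map fun d => (f d.fst - f d.snd) ^ 2).sum := by
  have := sq_sum_le_card_mul_sum_sq (s := univ)
    (f := fun i : Fin p.darts.length => f p.darts[i.1].fst - f p.darts[i.1].snd)
  rwa [Fin.sum_univ_fun_getElem p.darts (fun d => f d.fst - f d.snd), ← p.sub_eq_sum_darts,
    card_univ, Fintype.card_fin,
    Fin.sum_univ_fun_getElem p.darts (fun d => (f d.fst - f d.snd) ^ 2), length_darts] at this

theorem Connected.dist_le_add_add (hG : G.Connected) (u v w z : V) :
    (G.dist u z : ℝ) ≤ G.dist u v + G.dist v w + G.dist w z := by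
  exact_mod_cast (hG.dist_triangle (v := w)).trans (Nat.add_le_add_right hG.dist_triangle _)

variable [Fintype V] [DecidableRel G.Adj]

theorem Connected.card_dist_le_le (hG : G.Connected) {d : ℕ} (hdeg : ∀ v, G.degree v ≤ d)
    (u : V) (r : ℕ) : #{v | G.dist u v ≤ r} ≤ (d + 1) ^ r := by
  classical
  induction r with
  | zero =>
    simp only [Nat.le_zero, hG.dist_eq_zero_iff, pow_zero]
    exact card_le_one.mpr fun _ h₁ _ h₂ => (mem_filter.mp h₁).2.symm.trans (mem_filter.mp h₂).2
  | succ r ih =>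
    have hsub : ({v | G.dist u v ≤ r + 1} : Finset V) ⊆
        ({v | G.dist u v ≤ r} : Finset V).biUnion fun x => insert x (G.neighborFinset x) := by
      intro v hv
      simp only [mem_filter, mem_univ, true_and, mem_biUnion, mem_insert,
        mem_neighborFinset] at hv ⊢
      rcases le_or_gt (G.dist u v) r with hr | hr
      · exact ⟨v, hr, .inl rfl⟩
      obtain ⟨p, hp⟩ := hG.exists_walk_length_eq_dist v u
      cases p with
      | nil => simp at hr
      | cons h q =>
        refine ⟨_, ?_, .inr h.symm⟩
        rw [dist_comm]
        have := dist_le q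
        simp only [Walk.length_cons, dist_comm (u := v)] at hp
        omega
    calc #{v | G.dist u v ≤ r + 1}
        ≤ ∑ x ∈ {v | G.dist u v ≤ r}, #(insert x (G.neighborFinset x)) :=
          (card_le_card hsub).trans card_biUnion_le
      _ ≤ ∑ x ∈ {v | G.dist u v ≤ r}, (d + 1) := sum_le_sum fun x _ =>
          (card_insert_le _ _).trans (by rw [card_neighborFinset_eq_degree]; have := hdeg x; omega)
      _ ≤ (d + 1) ^ (r + 1) := by
          rw [sum_const, smul_eq_mul, pow_succ]; exact Nat.mul_le_mul_right _ ih

theorem Connected.exists_sum_degree_mul_sub_eq_zero (hG : G.Connected) (f : V → ℝ) :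
    ∃ c, ∑ v, G.degree v * (f v - c) = 0 ∧
      ∑ v, (f v - c) ^ 2 ≤ ∑ v, G.degree v * (f v - c) ^ 2 := by
  rcases subsingleton_or_nontrivial V with hV | hV
  · obtain ⟨v₀⟩ := hG.nonempty
    refine ⟨f v₀, ?_, ?_⟩ <;> simp [Subsingleton.elim _ v₀]
  have hdeg : ∀ v, (1 : ℝ) ≤ G.degree v := fun v => by
    exact_mod_cast hG.preconnected.degree_pos_of_nontrivial v
  have hsum : (∑ v, G.degree v : ℝ) ≠ 0 :=
    (sum_pos (fun v _ => one_pos.trans_le (hdeg v)) univ_nonempty).ne'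
  refine ⟨(∑ v, G.degree v * f v) / ∑ v, (G.degree v : ℝ), ?_,
    sum_le_sum fun v _ => le_mul_of_one_le_left (sq_nonneg _) (hdeg v)⟩
  simp only [mul_sub, sum_sub_distrib, ← sum_mul]
  field_simp
  ring

theorem sum_degree_mul_sq_le_mul_sum_sq_sub {d : ℕ} (hdeg : ∀ v, G.degree v ≤ d) {f : V → ℝ}
    (hf : ∑ v, G.degree v * f v = 0) (c : ℝ) :
    ∑ v, G.degree v * f v ^ 2 ≤ d * ∑ v, (f v - c) ^ 2 := by
  refine (sum_mul_sq_le_sum_mul_sub_sq univ (fun v _ => Nat.cast_nonneg _) hf c).trans ?_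
  rw [mul_sum]
  exact sum_le_sum fun v _ => by gcongr; exact_mod_cast hdeg v

theorem Connected.sum_degree_mul_sq_pos [Nontrivial V] (hG : G.Connected) {f : V → ℝ}
    (hf : f ≠ 0) : 0 < ∑ v, G.degree v * f v ^ 2 := by
  obtain ⟨v, hv⟩ := Function.ne_iff.mp hf
  have : (0 : ℝ) < G.degree v := by exact_mod_cast hG.preconnected.degree_pos_of_nontrivial v
  exact sum_pos' (fun v _ => by positivity) ⟨v, mem_univ _, mul_pos this (sq_pos_of_ne_zero hv)⟩

end SimpleGraph

section DirichletEnergy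

variable [Fintype V] (G : SimpleGraph V) [DecidableRel G.Adj]

noncomputable def dirichletEnergy (f : V → ℝ) : ℝ := ∑ d : G.Dart, (f d.fst - f d.snd) ^ 2

theorem dirichletEnergy_nonneg (f : V → ℝ) : 0 ≤ dirichletEnergy G f :=
  sum_nonneg fun _ _ => sq_nonneg _

theorem dirichletEnergy_sub_const (f : V → ℝ) (c : ℝ) :
    dirichletEnergy G (fun v => f v - c) = dirichletEnergy G f := by
  simp [dirichletEnergy]

variable [DecidableEq V]

theorem dirichletEnergy_eq_two_mul_dotProduct (f : V → ℝ) :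
    dirichletEnergy G f = 2 * (f ⬝ᵥ (G.lapMatrix ℝ *ᵥ f)) := by
  rw [← toLinearMap₂'_apply', lapMatrix_toLinearMap₂', mul_div_cancel₀ _ two_ne_zero,
    ← Fintype.sum_prod_type', ← sum_filter, dirichletEnergy]
  exact sum_bij (fun d _ => d.toProd) (fun d _ => mem_filter.mpr ⟨mem_univ _, d.adj⟩)
    (fun d _ d' _ => Dart.ext d d') (fun p hp => ⟨⟨p, (mem_filter.mp hp).2⟩, mem_univ _, rfl⟩)
    fun _ _ => rfl

variable {G}

theorem sum_sq_sub_le_mul_dirichletEnergy_of_walks {ι : Type*} [Fintype ι] {s t : ι → V}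
    (p : ∀ k, G.Walk (s k) (t k)) {L F : ℕ} (hlen : ∀ k, (p k).length ≤ L)
    (hload : ∀ x, #{k : ι | x ∈ (p k).support} ≤ F) (f : V → ℝ) :
    ∑ k, (f (s k) - f (t k)) ^ 2 ≤ L ^ 2 * F * dirichletEnergy G f := by
  set h : G.Dart → ℝ := fun d => (f d.fst - f d.snd) ^ 2
  have hcount : ∀ d : G.Dart, ∑ k, (p k).darts.count d ≤ L * F := fun d =>
    calc ∑ k, (p k).darts.count d = ∑ k with d.fst ∈ (p k).support, (p k).darts.count d :=
          (sum_filter_of_ne fun k _ hk => (p k).dart_fst_mem_support_of_mem_darts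
            (List.count_pos_iff.mp (Nat.pos_of_ne_zero hk))).symm
      _ ≤ ∑ k with d.fst ∈ (p k).support, L :=
          sum_le_sum fun k _ => List.count_le_length.trans ((p k).length_darts ▸ hlen k)
      _ ≤ L * F := by rw [sum_const, smul_eq_mul, mul_comm]; exact Nat.mul_le_mul_left _ (hload _)
  have hmap : ∀ l : List G.Dart, (l.map h).sum = ∑ d, l.count d * h d := fun l => by
    rw [sum_list_map_count]
    simp only [nsmul_eq_mul]
    exact sum_subset (subset_univ l.toFinset) fun d _ hd => by
      rw [List.count_eq_zero_of_not_mem (by simpa using hd), Nat.cast_zero, zero_mul]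
  calc ∑ k, (f (s k) - f (t k)) ^ 2 ≤ ∑ k, (L : ℝ) * ((p k).darts.map h).sum :=
        sum_le_sum fun k _ => ((p k).sq_sub_le_length_mul_sum_darts f).trans <|
          mul_le_mul_of_nonneg_right (by exact_mod_cast hlen k)
            (List.sum_nonneg fun _ hx => by obtain ⟨d, -, rfl⟩ := List.mem_map.mp hx; positivity)
    _ = L * ∑ d, ((∑ k, (p k).darts.count d : ℕ) : ℝ) * h d := by
        simp only [← mul_sum, hmap, Nat.cast_sum, sum_mul]
        rw [sum_comm]
    _ ≤ L * ∑ d, ((L * F : ℕ) : ℝ) * h d := by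
        gcongr with d
        exact_mod_cast hcount d
    _ = L ^ 2 * F * dirichletEnergy G f := by
        rw [dirichletEnergy, mul_sum, mul_sum]
        push_cast
        exact sum_congr rfl fun d _ => by ring

end DirichletEnergy

section LazyWalk

variable [Fintype V] [DecidableEq V] (G : SimpleGraph V) [DecidableRel G.Adj]

theorem lazyWalkMatrix_nonneg (u v : V) : 0 ≤ lazyWalkMatrix G u v := by
  unfold lazyWalkMatrix
  split_ifs <;> positivity

theorem lazyWalkMatrix_mulVec_apply (f : V → ℝ) (v : V) :
    (lazyWalkMatrix G *ᵥ f) v = f v / 2 + (∑ u ∈ G.neighborFinset v, f u) / (2 * G.degree v) := by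
  have hsplit : ∀ u, lazyWalkMatrix G v u * f u =
      (if v = u then f u / 2 else 0) + if G.Adj v u then f u / (2 * G.degree v) else 0 := by
    intro u
    rcases eq_or_ne v u with rfl | huv
    · simp [lazyWalkMatrix, div_eq_mul_inv, mul_comm]
    · simp only [lazyWalkMatrix, if_neg huv, zero_add]
      split_ifs <;> ring
  simp only [mulVec, dotProduct, hsplit, sum_add_distrib, sum_ite_eq, mem_univ, if_true, sum_div,
    neighborFinset_eq_filter, sum_filter, ite_div, zero_div]

theorem degree_mul_sub_lazyWalkMatrix_mulVec (f : V → ℝ) (v : V) :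
    G.degree v * (f v - (lazyWalkMatrix G *ᵥ f) v) = (G.lapMatrix ℝ *ᵥ f) v / 2 := by
  rw [lazyWalkMatrix_mulVec_apply, lapMatrix_mulVec_apply]
  rcases eq_or_ne (G.degree v : ℝ) 0 with hd | hd
  · have hN : G.neighborFinset v = ∅ := by
      rwa [← card_eq_zero, card_neighborFinset_eq_degree, ← Nat.cast_eq_zero (R := ℝ)]
    simp [hN, hd]
  · field_simp
    ring

theorem degree_mul_lazyWalkMatrix (u v : V) :
    G.degree u * lazyWalkMatrix G u v = G.degree v * lazyWalkMatrix G v u := by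
  unfold lazyWalkMatrix
  rcases eq_or_ne u v with rfl | huv
  · rfl
  rw [if_neg huv, if_neg huv.symm]
  by_cases h : G.Adj u v
  · rw [if_pos h, if_pos h.symm]
    have hu := (G.degree_pos_iff_exists_adj u).mpr ⟨v, h⟩
    have hv := (G.degree_pos_iff_exists_adj v).mpr ⟨u, h.symm⟩
    field_simp
  · rw [if_neg h, if_neg fun h' => h h'.symm, mul_zero, mul_zero]

theorem sum_degree_mul_mul_sub_lazyWalkMatrix_mulVec (f : V → ℝ) :
    ∑ v, G.degree v * f v * (f v - (lazyWalkMatrix G *ᵥ f) v) = dirichletEnergy G f / 4 := by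
  simp only [mul_comm _ (f _), mul_assoc, degree_mul_sub_lazyWalkMatrix_mulVec]
  rw [dirichletEnergy_eq_two_mul_dotProduct, dotProduct, mul_sum, sum_div]
  exact sum_congr rfl fun v _ => by ring

theorem sum_degree_mul_sub_lazyWalkMatrix_mulVec (f : V → ℝ) :
    ∑ v, G.degree v * (f v - (lazyWalkMatrix G *ᵥ f) v) = 0 := by
  simp only [degree_mul_sub_lazyWalkMatrix_mulVec, ← sum_div, ← dotProduct_one]
  rw [dotProduct_comm, dotProduct_mulVec, ← mulVec_transpose, (isSymm_lapMatrix ℝ G).eq,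
    show (1 : V → ℝ) = fun _ => 1 from rfl, lapMatrix_mulVec_const_eq_zero, zero_dotProduct,
    zero_div]

variable {G}

theorem lazyWalkMatrix_eigenvalue_mem_Icc {θ : ℝ} {f : V → ℝ} (hf : f ≠ 0)
    (h : lazyWalkMatrix G *ᵥ f = θ • f) : θ ∈ Set.Icc (0 : ℝ) 1 := by
  have hθ : Module.End.HasEigenvalue (toLin' (lazyWalkMatrix G)) θ :=
    Module.End.hasEigenvalue_of_hasEigenvector ⟨Module.End.mem_eigenspace_iff.mpr h, hf⟩
  obtain ⟨k, hk⟩ := eigenvalue_mem_ball hθ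
  have hdiag : lazyWalkMatrix G k k = 1 / 2 := if_pos rfl
  have hrow : ∑ j ∈ univ.erase k, ‖lazyWalkMatrix G k j‖ ≤ 1 / 2 := by
    have hsum := lazyWalkMatrix_mulVec_apply G 1 k
    simp only [mulVec, dotProduct, Pi.one_apply, mul_one, sum_const, nsmul_eq_mul,
      card_neighborFinset_eq_degree] at hsum
    rw [← add_sum_erase _ _ (mem_univ k), hdiag] at hsum
    have : (G.degree k : ℝ) / (2 * G.degree k) ≤ 1 / 2 := by
      rcases eq_or_ne (G.degree k : ℝ) 0 with h0 | h0
      · simp [h0]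
      · field_simp; rfl
    simp only [Real.norm_of_nonneg (lazyWalkMatrix_nonneg G _ _)]
    linarith
  rw [Metric.mem_closedBall, Real.dist_eq, hdiag] at hk
  constructor <;> linarith [abs_le.mp (hk.trans hrow)]

theorem SimpleGraph.Connected.eq_of_lazyWalkMatrix_mulVec_eq_self (hG : G.Connected)
    {f : V → ℝ} (hf : lazyWalkMatrix G *ᵥ f = f) (u v : V) : f u = f v := by
  have hL : G.lapMatrix ℝ *ᵥ f = 0 := funext fun v => by
    have := degree_mul_sub_lazyWalkMatrix_mulVec G f v
    rw [hf, sub_self, mul_zero] at this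
    simp only [Pi.zero_apply]
    linarith
  exact (G.lapMatrix_mulVec_eq_zero_iff_forall_reachable).mp hL u v (hG u v)

end LazyWalk

namespace IsLazySpectralGap

variable [Fintype V] [DecidableEq V] {G : SimpleGraph V} [DecidableRel G.Adj] {γ : ℝ}

theorem exists_eigenvector (hγ : IsLazySpectralGap G γ) :
    ∃ f : V → ℝ, f ≠ 0 ∧ lazyWalkMatrix G *ᵥ f = (1 - γ) • f :=
  let ⟨⟨_, f, hf, h⟩, _⟩ := hγ
  ⟨f, hf, funext h⟩

theorem le_of_eigenvector (hγ : IsLazySpectralGap G γ) {μ : ℝ} {f : V → ℝ} (hμ : μ ≠ 1)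
    (hf : f ≠ 0) (h : lazyWalkMatrix G *ᵥ f = μ • f) : μ ≤ 1 - γ :=
  hγ.2 ⟨hμ, f, hf, congrFun h⟩

theorem pos (hγ : IsLazySpectralGap G γ) : 0 < γ := by
  obtain ⟨f, hf, h⟩ := hγ.exists_eigenvector
  have hne := hγ.1.1
  have := (lazyWalkMatrix_eigenvalue_mem_Icc hf h).2
  contrapose! hne
  linarith

theorem le_one (hγ : IsLazySpectralGap G γ) : γ ≤ 1 := by
  obtain ⟨f, hf, h⟩ := hγ.exists_eigenvector
  linarith [(lazyWalkMatrix_eigenvalue_mem_Icc hf h).1]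

theorem eq_half_of_subsingleton [Subsingleton V] (hγ : IsLazySpectralGap G γ) : γ = 1 / 2 := by
  obtain ⟨f, hf, h⟩ := hγ.exists_eigenvector
  obtain ⟨v, hv⟩ := Function.ne_iff.mp hf
  have hv' := congrFun h v
  have hN : G.neighborFinset v = ∅ := by
    rw [← card_eq_zero, card_neighborFinset_eq_degree, degree_eq_zero_of_subsingleton]
  rw [lazyWalkMatrix_mulVec_apply, hN, sum_empty, zero_div, add_zero, Pi.smul_apply,
    smul_eq_mul] at hv'
  have := mul_right_cancel₀ hv (by linarith : (1 / 2 : ℝ) * f v = (1 - γ) * f v)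
  linarith

theorem exists_eigenfunction (hγ : IsLazySpectralGap G γ) :
    ∃ f : V → ℝ, f ≠ 0 ∧ ∑ v, G.degree v * f v = 0 ∧
      dirichletEnergy G f = 4 * γ * ∑ v, G.degree v * f v ^ 2 := by
  obtain ⟨f, hf, h⟩ := hγ.exists_eigenvector
  have hsub : ∀ v, f v - (lazyWalkMatrix G *ᵥ f) v = γ * f v := fun v => by
    rw [h, Pi.smul_apply, smul_eq_mul]; ring
  have hmean := sum_degree_mul_sub_lazyWalkMatrix_mulVec G f
  have hquad := sum_degree_mul_mul_sub_lazyWalkMatrix_mulVec G f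
  simp only [hsub] at hmean hquad
  refine ⟨f, hf, ?_, ?_⟩
  · have : γ * ∑ v, G.degree v * f v = 0 := by
      rw [mul_sum, ← hmean]; exact sum_congr rfl fun v _ => by ring
    exact (mul_eq_zero.mp this).resolve_left hγ.pos.ne'
  · have : 4 * γ * ∑ v, G.degree v * f v ^ 2 = 4 * ∑ v, G.degree v * f v * (γ * f v) := by
      rw [mul_sum, mul_sum]; exact sum_congr rfl fun v _ => by ring
    linarith

theorem mul_sum_le_dirichletEnergy (hγ : IsLazySpectralGap G γ) (hG : G.Connected) {g : V → ℝ}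
    (hg : ∑ v, G.degree v * g v = 0) : 4 * γ * ∑ v, G.degree v * g v ^ 2 ≤ dirichletEnergy G g := by
  rcases subsingleton_or_nontrivial V with hV | hV
  · simpa [degree_eq_zero_of_subsingleton] using dirichletEnergy_nonneg G g
  have hdeg : ∀ v, (0 : ℝ) < G.degree v := fun v => by
    exact_mod_cast hG.preconnected.degree_pos_of_nontrivial v
  have hbound := sum_mul_mulVec_le_of_detailed_balance hdeg (degree_mul_lazyWalkMatrix G)
    (r := 1 - γ) (g := g) fun μ f hf hMf => by
      rcases eq_or_ne μ 1 with rfl | hμ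
      · right
        have hconst := hG.eq_of_lazyWalkMatrix_mulVec_eq_self (hMf.trans (one_smul _ _))
        obtain ⟨v₀⟩ := hG.nonempty
        simp only [hconst _ v₀, mul_comm _ (f v₀), mul_assoc, ← mul_sum, hg, mul_zero]
      · exact .inl (hγ.le_of_eigenvector hμ hf hMf)
  have hquad := sum_degree_mul_mul_sub_lazyWalkMatrix_mulVec G g
  have hsplit : ∑ v, G.degree v * g v * (g v - (lazyWalkMatrix G *ᵥ g) v) =
      ∑ v, G.degree v * g v ^ 2 - ∑ v, G.degree v * g v * (lazyWalkMatrix G *ᵥ g) v := by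
    rw [← sum_sub_distrib]; exact sum_congr rfl fun v _ => by ring
  linarith

end IsLazySpectralGap

namespace IsGraphQuasiIsometry

variable {V' : Type*} {G : SimpleGraph V} {G' : SimpleGraph V'} {a b : ℝ} {ψ : V → V'}

theorem b_nonneg (hψ : IsGraphQuasiIsometry G G' a b ψ) (u : V) : 0 ≤ b := by
  simpa using (hψ.1 u u).2

theorem dist_le (hψ : IsGraphQuasiIsometry G G' a b ψ) (ha : 0 < a) (u v : V) :
    (G.dist u v : ℝ) ≤ a * (G'.dist (ψ u) (ψ v) + b) := by
  rw [← inv_mul_le_iff₀ ha]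
  linarith [(hψ.1 u v).1]

theorem dist_le_of_adj (hψ : IsGraphQuasiIsometry G G' a b ψ) {L : ℕ} (hL : a + b ≤ L)
    {u v : V} (h : G.Adj u v) : G'.dist (ψ u) (ψ v) ≤ L := by
  have := (hψ.1 u v).2
  rw [dist_eq_one_iff_adj.mpr h, Nat.cast_one, mul_one] at this
  exact_mod_cast this.trans hL

theorem exists_inverse (hψ : IsGraphQuasiIsometry G G' a b ψ) (ha : 1 ≤ a) (hG' : G'.Connected) :
    ∃ φ : V' → V, IsGraphQuasiIsometry G' G a (a * (2 * a + 3 * b)) φ := by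
  have ha₀ : 0 < a := one_pos.trans_le ha
  choose φ hφ using hψ.2
  have hφ' : ∀ y, (G'.dist y (ψ (φ y)) : ℝ) ≤ a + b := fun y => dist_comm (G := G') ▸ hφ y
  refine ⟨φ, fun y₁ y₂ => ⟨?_, ?_⟩, fun x => ⟨ψ x, ?_⟩⟩
  · have hb := hψ.b_nonneg (φ y₁)
    have h₁ := hG'.dist_le_add_add y₁ (ψ (φ y₁)) (ψ (φ y₂)) y₂
    have h₂ := (hψ.1 (φ y₁) (φ y₂)).2
    have : 2 * a + 3 * b ≤ a * (a * (2 * a + 3 * b)) := by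
      nlinarith [mul_nonneg (mul_nonneg (sub_nonneg.2 ha) ha₀.le) (by linarith : 0 ≤ 2 * a + 3 * b)]
    rw [sub_le_iff_le_add, inv_mul_le_iff₀ ha₀]
    linarith [hφ' y₁, hφ y₂]
  · have h₁ := hG'.dist_le_add_add (ψ (φ y₁)) y₁ y₂ (ψ (φ y₂))
    have h₂ := hψ.dist_le ha₀ (φ y₁) (φ y₂)
    calc (G.dist (φ y₁) (φ y₂) : ℝ) ≤ a * (G'.dist (ψ (φ y₁)) (ψ (φ y₂)) + b) := h₂
      _ ≤ a * (G'.dist y₁ y₂ + (2 * a + 3 * b)) := by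
          exact mul_le_mul_of_nonneg_left (by linarith [hφ y₁, hφ' y₂]) ha₀.le
      _ = a * G'.dist y₁ y₂ + a * (2 * a + 3 * b) := by ring
  · have h₁ := hψ.dist_le ha₀ (φ (ψ x)) x
    have hb := hψ.b_nonneg x
    calc (G.dist (φ (ψ x)) x : ℝ) ≤ a * (G'.dist (ψ (φ (ψ x))) (ψ x) + b) := h₁
      _ ≤ a * (a + b + b) := by gcongr; exact hφ (ψ x)
      _ ≤ a + a * (2 * a + 3 * b) := by nlinarith

variable [Fintype V] {d : ℕ}

section

variable [DecidableRel G.Adj]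

theorem card_dist_le_le (hψ : IsGraphQuasiIsometry G G' a b ψ)
    (ha : 0 < a) (hG : G.Connected) (hG' : G'.Connected) (hdeg : ∀ v, G.degree v ≤ d)
    (x : V') {r R : ℕ} (hR : a * (2 * r + b) ≤ R) : #{u | G'.dist (ψ u) x ≤ r} ≤ (d + 1) ^ R := by
  rcases eq_empty_or_nonempty {u | G'.dist (ψ u) x ≤ r} with h | ⟨u₀, hu₀⟩
  · simp [h]
  refine (card_le_card fun u hu => ?_).trans (hG.card_dist_le_le hdeg u₀ R)
  simp only [mem_filter, mem_univ, true_and] at hu₀ hu ⊢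
  have h₁ := hψ.dist_le ha u₀ u
  have h₂ : (G'.dist (ψ u₀) (ψ u) : ℝ) ≤ 2 * r := by
    have := hG'.dist_triangle (u := ψ u₀) (v := x) (w := ψ u)
    rw [dist_comm (u := x)] at this
    exact_mod_cast (by omega : G'.dist (ψ u₀) (ψ u) ≤ 2 * r)
  exact_mod_cast h₁.trans ((mul_le_mul_of_nonneg_left (by linarith) ha.le).trans hR)

end

variable [Fintype V'] [DecidableEq V'] [DecidableRel G'.Adj]

theorem sum_sq_sub_le_dirichletEnergy_add (hψ : IsGraphQuasiIsometry G G' a b ψ)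
    (hG' : G'.Connected) (hdeg' : ∀ v, G'.degree v ≤ d) {L : ℕ} (hL : a + b ≤ L)
    (f : V' → ℝ) (c : ℝ) :
    ∑ y, (f y - c) ^ 2 ≤ 2 * L ^ 2 * (d + 1) ^ L * dirichletEnergy G' f +
      2 * (d + 1) ^ L * ∑ x, (f (ψ x) - c) ^ 2 := by
  classical
  choose φ hφ using hψ.2
  have hφL : ∀ y, G'.dist y (ψ (φ y)) ≤ L := fun y => by
    rw [dist_comm]; exact_mod_cast (hφ y).trans hL
  have hball : ∀ x, #{y | G'.dist y x ≤ L} ≤ (d + 1) ^ L := fun x => by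
    simpa only [dist_comm (u := x)] using hG'.card_dist_le_le hdeg' x L
  choose p hp using hG'.exists_walk_length_eq_dist
  have hmove : ∑ y, (f y - f (ψ (φ y))) ^ 2 ≤ L ^ 2 * (d + 1) ^ L * dirichletEnergy G' f := by
    have hlen : ∀ y, (p y (ψ (φ y))).length ≤ L := fun y => (hp _ _).trans_le (hφL y)
    exact_mod_cast sum_sq_sub_le_mul_dirichletEnergy_of_walks (fun y => p y (ψ (φ y))) hlen
      (fun x => (card_le_card fun y hy => by
        simp only [mem_filter, mem_univ, true_and] at hy ⊢
        exact ((p _ _).dist_le_of_mem_support hy).trans (hlen y)).trans (hball x)) f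
  have hfiber : ∑ y, (f (ψ (φ y)) - c) ^ 2 ≤ (d + 1) ^ L * ∑ x, (f (ψ x) - c) ^ 2 := by
    rw [← sum_fiberwise univ φ, mul_sum]
    refine sum_le_sum fun x _ => ?_
    have hcard : #{y | φ y = x} ≤ (d + 1) ^ L := (card_le_card fun y hy => by
      simp only [mem_filter, mem_univ, true_and] at hy ⊢
      exact hy ▸ hφL y).trans (hball (ψ x))
    calc ∑ y with φ y = x, (f (ψ (φ y)) - c) ^ 2 = #{y | φ y = x} * (f (ψ x) - c) ^ 2 := by
          rw [← nsmul_eq_mul, ← sum_const]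
          exact sum_congr rfl fun y hy => by rw [(mem_filter.mp hy).2]
      _ ≤ (d + 1) ^ L * (f (ψ x) - c) ^ 2 := by gcongr; exact_mod_cast hcard
  calc ∑ y, (f y - c) ^ 2 ≤ ∑ y, (2 * (f y - f (ψ (φ y))) ^ 2 + 2 * (f (ψ (φ y)) - c) ^ 2) :=
        sum_le_sum fun y _ => by nlinarith [sq_nonneg (f y - 2 * f (ψ (φ y)) + c)]
    _ ≤ _ := by rw [sum_add_distrib, ← mul_sum, ← mul_sum]; nlinarith

theorem sum_degree_mul_sq_le (hψ : IsGraphQuasiIsometry G G' a b ψ) (hG' : G'.Connected)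
    (hdeg' : ∀ v, G'.degree v ≤ d) {L : ℕ} (hL : a + b ≤ L) {f : V' → ℝ}
    (hf : ∑ y, G'.degree y * f y = 0) (c : ℝ) :
    ∑ y, G'.degree y * f y ^ 2 ≤ 2 * d * L ^ 2 * (d + 1) ^ L * dirichletEnergy G' f +
      2 * d * (d + 1) ^ L * ∑ x, (f (ψ x) - c) ^ 2 := by
  have h₁ := sum_degree_mul_sq_le_mul_sum_sq_sub hdeg' hf c
  have h₂ := mul_le_mul_of_nonneg_left (hψ.sum_sq_sub_le_dirichletEnergy_add hG' hdeg' hL f c)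
    (Nat.cast_nonneg (α := ℝ) d)
  linarith

variable [DecidableRel G.Adj]

theorem dirichletEnergy_comp_le (hψ : IsGraphQuasiIsometry G G' a b ψ)
    (ha : 0 < a) (hG : G.Connected) (hG' : G'.Connected) (hdeg : ∀ v, G.degree v ≤ d)
    {L R : ℕ} (hL : a + b ≤ L) (hR : a * (2 * L + b) ≤ R) (f : V' → ℝ) :
    dirichletEnergy G (f ∘ ψ) ≤ L ^ 2 * (d * (d + 1) ^ R : ℕ) * dirichletEnergy G' f := by
  classical
  choose p hp using hG'.exists_walk_length_eq_dist
  have hlen : ∀ e : G.Dart, (p (ψ e.fst) (ψ e.snd)).length ≤ L := fun e =>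
    (hp _ _).trans_le (hψ.dist_le_of_adj hL e.adj)
  refine sum_sq_sub_le_mul_dirichletEnergy_of_walks (fun e : G.Dart => p (ψ e.fst) (ψ e.snd))
    hlen (fun x => ?_) f
  set T : Finset V := {u | G'.dist (ψ u) x ≤ L}
  calc #{e : G.Dart | x ∈ (p (ψ e.fst) (ψ e.snd)).support}
      ≤ #{e : G.Dart | e.fst ∈ T} := card_le_card fun e he => by
        simp only [T, mem_filter, mem_univ, true_and] at he ⊢
        exact ((p _ _).dist_le_of_mem_support he).trans (hlen e)
    _ ≤ ∑ u ∈ T, #{e ∈ ({e : G.Dart | e.fst ∈ T} : Finset _) | e.fst = u} :=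
        (card_eq_sum_card_fiberwise fun e he => (mem_filter.mp he).2).le
    _ ≤ ∑ _u ∈ T, d := sum_le_sum fun u _ =>
        (card_le_card (filter_subset_filter _ (subset_univ _))).trans
          ((G.dart_fst_fiber_card_eq_degree u).trans_le (hdeg u))
    _ ≤ d * (d + 1) ^ R := by
        rw [sum_const, smul_eq_mul, mul_comm]
        exact Nat.mul_le_mul_left _ (hψ.card_dist_le_le ha hG hG' hdeg x hR)

end IsGraphQuasiIsometry

theorem le_mul_of_mul_le_of_le_mul_add {γ γ' S S' K₁ K₂ K₃ : ℝ} (hγ : γ ≤ 1) (hγ' : 0 < γ')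
    (hK₁ : 0 ≤ K₁) (hK₂ : 0 ≤ K₂) (hK₃ : 0 ≤ K₃) (hS' : 0 < S') (hray : γ * S ≤ K₁ * γ' * S')
    (htransfer : S' ≤ K₂ * γ' * S' + K₃ * S) : γ ≤ (2 * K₂ + 2 * K₁ * K₃) * γ' := by
  by_cases hsmall : 1 ≤ 2 * K₂ * γ'
  · nlinarith [mul_nonneg (mul_nonneg hK₁ hK₃) hγ'.le]
  have hS'S : S' ≤ 2 * K₃ * S := by nlinarith
  have hS : 0 < S := by nlinarith
  have : γ * S ≤ 2 * K₁ * K₃ * γ' * S := by nlinarith [mul_nonneg hK₁ hγ'.le]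
  nlinarith [le_of_mul_le_mul_right this hS, mul_nonneg hK₂ hγ'.le]

-- `2 K₂ + 2 K₁ K₃ + 2` in the notation of the proof of
-- `IsLazySpectralGap.le_mul_of_isGraphQuasiIsometry`, with `L = ⌈a + b⌉₊`, `R = ⌈a (2L + b)⌉₊`.
noncomputable def gapComparisonConst (a b : ℝ) (d : ℕ) : ℝ :=
  16 * d * ⌈a + b⌉₊ ^ 2 * (d + 1) ^ ⌈a + b⌉₊ +
    4 * d ^ 2 * ⌈a + b⌉₊ ^ 2 * (d + 1) ^ (⌈a * (2 * ⌈a + b⌉₊ + b)⌉₊ + ⌈a + b⌉₊) + 2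

theorem gapComparisonConst_pos (a b : ℝ) (d : ℕ) : 0 < gapComparisonConst a b d := by
  unfold gapComparisonConst
  positivity

section Comparison

variable {V' : Type*} [Fintype V] [Fintype V'] [DecidableEq V] [DecidableEq V']
  {G : SimpleGraph V} {G' : SimpleGraph V'} [DecidableRel G.Adj] [DecidableRel G'.Adj]
  {a b : ℝ} {d : ℕ} {ψ : V → V'}

theorem IsLazySpectralGap.le_mul_of_isGraphQuasiIsometry {γ γ' : ℝ} (hγ : IsLazySpectralGap G γ)
    (hγ' : IsLazySpectralGap G' γ') (hψ : IsGraphQuasiIsometry G G' a b ψ) (ha : 0 < a)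
    (hG : G.Connected) (hG' : G'.Connected) (hdeg : ∀ v, G.degree v ≤ d)
    (hdeg' : ∀ v, G'.degree v ≤ d) : γ ≤ gapComparisonConst a b d * γ' := by
  set L := ⌈a + b⌉₊
  set R := ⌈a * (2 * L + b)⌉₊
  set K₁ : ℝ := L ^ 2 * (d * (d + 1) ^ R : ℕ)
  set K₂ : ℝ := 8 * d * L ^ 2 * (d + 1) ^ L
  set K₃ : ℝ := 2 * d * (d + 1) ^ L
  have hC : gapComparisonConst a b d = 2 * K₂ + 2 * K₁ * K₃ + 2 := by
    simp only [gapComparisonConst, K₁, K₂, K₃, L, R]; push_cast; ring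
  have hK₁ : 0 ≤ K₁ := by positivity
  have hK₂ : 0 ≤ K₂ := by positivity
  have hK₃ : 0 ≤ K₃ := by positivity
  rcases subsingleton_or_nontrivial V' with hV' | hV'
  · rw [hγ'.eq_half_of_subsingleton, hC]; nlinarith [hγ.le_one, mul_nonneg hK₁ hK₃]
  obtain ⟨f', hf'0, hmean', hE'⟩ := hγ'.exists_eigenfunction
  set S' := ∑ y, (G'.degree y : ℝ) * f' y ^ 2
  have hS' : 0 < S' := hG'.sum_degree_mul_sq_pos hf'0
  obtain ⟨c, hmean, hvar⟩ := hG.exists_sum_degree_mul_sub_eq_zero (f' ∘ ψ)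
  set S := ∑ v, (G.degree v : ℝ) * ((f' ∘ ψ) v - c) ^ 2
  have hray : γ * S ≤ K₁ * γ' * S' := by
    have h₁ := hγ.mul_sum_le_dirichletEnergy hG hmean
    have h₂ : dirichletEnergy G (f' ∘ ψ) ≤ K₁ * dirichletEnergy G' f' :=
      hψ.dirichletEnergy_comp_le ha hG hG' hdeg (Nat.le_ceil _) (Nat.le_ceil _) f'
    rw [dirichletEnergy_sub_const] at h₁
    rw [hE'] at h₂
    linarith
  have htransfer : S' ≤ K₂ * γ' * S' + K₃ * S := by
    have h₁ := hψ.sum_degree_mul_sq_le hG' hdeg' (Nat.le_ceil _) hmean' c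
    have h₂ := mul_le_mul_of_nonneg_left hvar hK₃
    rw [hE'] at h₁
    simp only [K₂, K₃, Function.comp_apply] at h₁ h₂ ⊢
    linarith
  calc γ ≤ (2 * K₂ + 2 * K₁ * K₃) * γ' :=
        le_mul_of_mul_le_of_le_mul_add hγ.le_one hγ'.pos hK₁ hK₂ hK₃ hS' hray htransfer
    _ ≤ gapComparisonConst a b d * γ' := by rw [hC]; linarith [hγ'.pos]

end Comparison

theorem quasi_isometry_spectral_gap_comparison_general
    (a b : ℝ) (d : ℕ) (ha : 1 ≤ a) :
    ∃ c C : ℝ, 0 < c ∧ 0 < C ∧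
      ∀ (V V' : Type) [Fintype V] [Fintype V'] [DecidableEq V] [DecidableEq V']
        (G : SimpleGraph V) (G' : SimpleGraph V')
        [DecidableRel G.Adj] [DecidableRel G'.Adj],
        G.Connected → G'.Connected →
        (∀ v : V, G.degree v ≤ d) → (∀ v : V', G'.degree v ≤ d) →
        ∀ ψ : V → V', IsGraphQuasiIsometry G G' a b ψ →
        ∀ γ γ' : ℝ, IsLazySpectralGap G γ → IsLazySpectralGap G' γ' →
          c * γ' ≤ γ ∧ γ ≤ C * γ' := by
  have ha₀ : 0 < a := one_pos.trans_le ha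
  have hC' := gapComparisonConst_pos a (a * (2 * a + 3 * b)) d
  refine ⟨(gapComparisonConst a (a * (2 * a + 3 * b)) d)⁻¹, gapComparisonConst a b d,
    inv_pos.mpr hC', gapComparisonConst_pos a b d, ?_⟩
  intro V V' _ _ _ _ G G' _ _ hG hG' hdeg hdeg' ψ hψ γ γ' hγ hγ'
  obtain ⟨φ, hφ⟩ := hψ.exists_inverse ha hG'
  refine ⟨?_, hγ.le_mul_of_isGraphQuasiIsometry hγ' hψ ha₀ hG hG' hdeg hdeg'⟩
  rw [inv_mul_le_iff₀ hC']
  exact hγ'.le_mul_of_isGraphQuasiIsometry hγ hφ ha₀ hG' hG hdeg' hdeg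

/-- If two finite connected graphs with maximum degree at most `d` are `(a,b)`
quasi-isometric, then the ratio of the spectral gaps of their lazy simple random walks is
bounded above and below by positive constants depending only on `a`, `b` and `d`. -/
theorem quasi_isometry_spectral_gap_comparison
    (a b : ℝ) (d : ℕ) (ha : 1 ≤ a) (hb : 0 ≤ b) :
    ∃ c C : ℝ, 0 < c ∧ 0 < C ∧
      ∀ (V V' : Type) [Fintype V] [Fintype V'] [DecidableEq V] [DecidableEq V']
        (G : SimpleGraph V) (G' : SimpleGraph V')
        [DecidableRel G.Adj] [DecidableRel G'.Adj],
        G.Connected → G'.Connected →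
        (∀ v : V, G.degree v ≤ d) → (∀ v : V', G'.degree v ≤ d) →
        ∀ ψ : V → V', IsGraphQuasiIsometry G G' a b ψ →
        ∀ γ γ' : ℝ, IsLazySpectralGap G γ → IsLazySpectralGap G' γ' →
          c * γ' ≤ γ ∧ γ ≤ C * γ' :=
  quasi_isometry_spectral_gap_comparison_general a b d ha
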